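/- arXiv:2110.11430 — 4 statements merged into one kernel-verified Lean document; each statement's English description precedes it below -/
import Mathlib

section
/- Let A be an n×n symmetric real matrix, Q the Householder reflector with v = (1,...,1,1+√n)^T, V = I - (1/n)J the centering matrix, and write QAQ in block form as [[Â, f],[f^T, ξ]] where Â is (n-1)×(n-1). Then VAV = Q · [[Â, 0],[0, 0]] · Q. -/
/-!
The Householder vector `v = 𝟙 + √n eₙ` is chosen so that the reflection `Q` maps `eₙ` to
`-𝟙/√n`. As `Q` is a symmetric involution, `Q (I - eₙeₙᵀ) Q = I - (1/n) 𝟙𝟙ᵀ = V`. Zeroing the last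
row and column of `QAQ` is multiplication by `I - eₙeₙᵀ` on both sides, so
`Q [[Â, 0], [0, 0]] Q = (Q (I - eₙeₙᵀ) Q) A (Q (I - eₙeₙᵀ) Q) = VAV`.
-/

open Matrix

namespace Matrix

variable {ι K : Type*} [Fintype ι] [DecidableEq ι] [Field K]

def householder (v : ι → K) : Matrix ι ι K := 1 - (2 / (v ⬝ᵥ v)) • vecMulVec v v

theorem householder_transpose (v : ι → K) : (householder v)ᵀ = householder v := by
  simp [householder, transpose_sub, transpose_vecMulVec]

theorem householder_mul_self {v : ι → K} (hv : v ⬝ᵥ v ≠ 0) :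
    householder v * householder v = 1 := by
  have hcoef : 2 / (v ⬝ᵥ v) * (2 / (v ⬝ᵥ v)) * (v ⬝ᵥ v) = 2 * (2 / (v ⬝ᵥ v)) := by
    field_simp
  simp only [householder, sub_mul, mul_sub, one_mul, mul_one, smul_mul_smul_comm,
    vecMulVec_mul_vecMulVec, vecMulVec_smul, smul_smul, hcoef]
  module

theorem householder_mulVec (v x : ι → K) :
    householder v *ᵥ x = x - (2 * (v ⬝ᵥ x) / (v ⬝ᵥ v)) • v := by
  simp [householder, sub_mulVec, smul_mulVec, vecMulVec_mulVec, smul_smul, mul_div_right_comm]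

theorem mul_single_mul_of_transpose_eq {Q : Matrix ι ι K} (hQ : Qᵀ = Q) (k : ι) :
    Q * single k k 1 * Q = vecMulVec (Q *ᵥ Pi.single k 1) (Q *ᵥ Pi.single k 1) := by
  rw [single_eq_single_vecMulVec_single, mul_vecMulVec, vecMulVec_mul, ← mulVec_transpose, hQ]

theorem of_ite_eq_or_eq_zero (M : Matrix ι ι K) (k : ι) :
    of (fun i j => if i = k ∨ j = k then 0 else M i j) =
      (1 - single k k 1) * M * (1 - single k k 1) := by
  ext i j
  by_cases hi : i = k <;> by_cases hj : j = k <;>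
    simp [hi, hj, eq_comm (a := k), sub_mul, mul_sub, single_mul_apply_of_ne,
      mul_single_apply_of_ne, single_mul_apply_same, mul_single_apply_same]

def onesAddSingle (k : ι) (s : K) : ι → K := fun i => if i = k then 1 + s else 1

variable {k : ι} {s : K}

theorem onesAddSingle_dotProduct_self (hs : s ^ 2 = Fintype.card ι) :
    onesAddSingle k s ⬝ᵥ onesAddSingle k s = 2 * s * (s + 1) := by
  have hsq (i : ι) :
      onesAddSingle k s i * onesAddSingle k s i = 1 + if i = k then 2 * s + s ^ 2 else 0 := by
    unfold onesAddSingle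
    split_ifs <;> ring
  simp only [dotProduct, hsq, Finset.sum_add_distrib, Finset.sum_ite_eq', Finset.mem_univ, if_true,
    Finset.sum_const, Finset.card_univ, nsmul_eq_mul, mul_one, ← hs]
  ring

theorem householder_onesAddSingle_mulVec_single (hs : s ^ 2 = Fintype.card ι)
    (hv : onesAddSingle k s ⬝ᵥ onesAddSingle k s ≠ 0) :
    householder (onesAddSingle k s) *ᵥ Pi.single k 1 = fun _ => -s⁻¹ := by
  rw [onesAddSingle_dotProduct_self hs] at hv
  have hs0 : s ≠ 0 := by rintro rfl; simp at hv
  have hs1 : s + 1 ≠ 0 := by rintro h; simp [h] at hv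
  have h2 : (2 : K) ≠ 0 := by rintro h; simp [h] at hv
  rw [householder_mulVec, dotProduct_single_one, onesAddSingle_dotProduct_self hs]
  ext i
  by_cases hi : i = k <;> simp [onesAddSingle, hi] <;> field_simp <;> ring

theorem householder_onesAddSingle_mul_compl_single_mul (hs : s ^ 2 = Fintype.card ι)
    (hv : onesAddSingle k s ⬝ᵥ onesAddSingle k s ≠ 0) :
    householder (onesAddSingle k s) * (1 - single k k 1) * householder (onesAddSingle k s) =
      1 - (Fintype.card ι : K)⁻¹ • of fun _ _ => 1 := by
  rw [mul_sub, sub_mul, mul_one, householder_mul_self hv,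
    mul_single_mul_of_transpose_eq (householder_transpose _),
    householder_onesAddSingle_mulVec_single hs hv]
  ext i j
  simp [vecMulVec_apply, ← hs, sq]

end Matrix

theorem center_eq_householder_block_general (n : ℕ) (A : Matrix (Fin (n + 1)) (Fin (n + 1)) ℝ) :
    let v : Fin (n + 1) → ℝ := fun i => if i = Fin.last n then 1 + Real.sqrt (n + 1) else 1
    let Q : Matrix (Fin (n + 1)) (Fin (n + 1)) ℝ := 1 - (2 / (v ⬝ᵥ v)) • vecMulVec v v
    let J : Matrix (Fin (n + 1)) (Fin (n + 1)) ℝ := Matrix.of fun _ _ => (1 : ℝ)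
    let V : Matrix (Fin (n + 1)) (Fin (n + 1)) ℝ := 1 - ((n : ℝ) + 1)⁻¹ • J
    let B : Matrix (Fin (n + 1)) (Fin (n + 1)) ℝ :=
      Matrix.of fun i j =>
        if i = Fin.last n ∨ j = Fin.last n then 0 else (Q * A * Q) i j
    V * A * V = Q * B * Q := by
  intro v Q J V B
  have hs : √((n : ℝ) + 1) ^ 2 = Fintype.card (Fin (n + 1)) := by
    rw [Real.sq_sqrt (by positivity)]
    simp
  have hv : v ⬝ᵥ v ≠ 0 := by
    change onesAddSingle _ _ ⬝ᵥ onesAddSingle _ _ ≠ 0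
    rw [onesAddSingle_dotProduct_self hs]
    positivity
  have hV : V = Q * (1 - single (Fin.last n) (Fin.last n) 1) * Q := by
    rw [show Q = householder (onesAddSingle _ _) from rfl,
      householder_onesAddSingle_mul_compl_single_mul hs hv]
    simp [V, J]
  have hB : B = (1 - single (Fin.last n) (Fin.last n) 1) * (Q * A * Q) *
      (1 - single (Fin.last n) (Fin.last n) 1) :=
    of_ite_eq_or_eq_zero _ _
  rw [hV, hB]
  simp only [Matrix.mul_assoc]

theorem center_eq_householder_block (n : ℕ) (A : Matrix (Fin (n + 1)) (Fin (n + 1)) ℝ)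
    (hA : A.IsSymm) :
    let v : Fin (n + 1) → ℝ := fun i => if i = Fin.last n then 1 + Real.sqrt (n + 1) else 1
    let Q : Matrix (Fin (n + 1)) (Fin (n + 1)) ℝ := 1 - (2 / (v ⬝ᵥ v)) • vecMulVec v v
    let J : Matrix (Fin (n + 1)) (Fin (n + 1)) ℝ := Matrix.of fun _ _ => (1 : ℝ)
    let V : Matrix (Fin (n + 1)) (Fin (n + 1)) ℝ := 1 - ((n : ℝ) + 1)⁻¹ • J
    let B : Matrix (Fin (n + 1)) (Fin (n + 1)) ℝ :=
      Matrix.of fun i j =>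
        if i = Fin.last n ∨ j = Fin.last n then 0 else (Q * A * Q) i j
    V * A * V = Q * B * Q :=
  center_eq_householder_block_general n A
end

section
/- Let M be a real symmetric n×n matrix with eigenvalues μ_1 ≥ ... ≥ μ_n. Among all positive semi-definite matrices B of rank at most r, the minimum of ||B - M||_F^2 equals the sum of μ_i^2 over all indices i such that μ_i < 0 or i > r (i.e., discarding all but the r largest positive eigenvalues). -/
/-!
Conjugating by `U` reduces to `M = diagonal μ`. Write a competitor as `X = W * diagonal d * Wᵀ`
with `W` orthogonal, `d ≥ 0` and at most `r` nonzero `dⱼ`, and expand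
`‖X - diagonal μ‖² = ∑ d² - 2 ∑ μᵢ Xᵢᵢ + ∑ μ²`. As `Xᵢᵢ ≥ 0`, `μ` may be replaced by `a = μ⁺`.
Then `∑ aᵢ Xᵢᵢ = ∑ dⱼ bⱼ` with `bⱼ = ∑ᵢ aᵢ Wᵢⱼ²`, and `2 dⱼ bⱼ - dⱼ² ≤ bⱼ²` on the at most `r`
indices with `dⱼ ≠ 0`. By Cauchy–Schwarz `bⱼ² ≤ ∑ᵢ aᵢ² Wᵢⱼ²`, so summing over these `j` gives
at most `∑ᵢ aᵢ² wᵢ` with weights `wᵢ ∈ [0, 1]` of total mass at most `r`; as `a²` is antitone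
this is at most `∑_{i < r} aᵢ²`. The bound is attained by `U * diagonal ν * Uᵀ`, where
`ν = truncPosPart r μ` keeps the positive parts of the first `r` eigenvalues.
-/

open Matrix Finset

namespace Matrix

variable {ι κ : Type*}

lemma sum_sq_apply_eq_trace_transpose_mul [Fintype ι] [Fintype κ] (X : Matrix κ ι ℝ) :
    ∑ i, ∑ j, X i j ^ 2 = trace (Xᵀ * X) := by
  rw [Finset.sum_comm]
  simp [trace, mul_apply, sq]

lemma sum_sq_mul_mul_transpose_apply [Fintype ι] [Fintype κ] [DecidableEq ι]
    {U : Matrix κ ι ℝ} (hU : Uᵀ * U = 1) (A : Matrix ι ι ℝ) :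
    ∑ i, ∑ j, (U * A * Uᵀ) i j ^ 2 = ∑ i, ∑ j, A i j ^ 2 := by
  have h : (U * A * Uᵀ)ᵀ * (U * A * Uᵀ) = U * (Aᵀ * A * Uᵀ) := by
    simp only [transpose_mul, transpose_transpose, Matrix.mul_assoc]
    rw [← Matrix.mul_assoc Uᵀ U, hU, Matrix.one_mul]
  rw [sum_sq_apply_eq_trace_transpose_mul, sum_sq_apply_eq_trace_transpose_mul, h,
    trace_mul_comm, Matrix.mul_assoc, hU, Matrix.mul_one]

lemma sum_sq_sub_mul_mul_transpose_apply [Fintype ι] [Fintype κ] [DecidableEq ι]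
    {U : Matrix κ ι ℝ} (hU : Uᵀ * U = 1) (A B : Matrix ι ι ℝ) :
    ∑ i, ∑ j, ((U * A * Uᵀ) i j - (U * B * Uᵀ) i j) ^ 2 = ∑ i, ∑ j, (A i j - B i j) ^ 2 := by
  simp only [← sub_apply, ← Matrix.mul_sub, ← Matrix.sub_mul]
  exact sum_sq_mul_mul_transpose_apply hU (A - B)

lemma sum_sq_apply_of_transpose_mul_self [Fintype κ] [DecidableEq ι] {W : Matrix κ ι ℝ}
    (hW : Wᵀ * W = 1) (j : ι) :
    ∑ i, W i j ^ 2 = 1 := by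
  simpa [mul_apply, sq] using congrFun (congrFun hW j) j

lemma mul_diagonal_mul_transpose_apply_self [Fintype ι] [DecidableEq ι] (W : Matrix κ ι ℝ)
    (d : ι → ℝ) (i : κ) :
    (W * diagonal d * Wᵀ) i i = ∑ j, d j * W i j ^ 2 := by
  rw [mul_apply]
  simp only [mul_diagonal, transpose_apply]
  exact Finset.sum_congr rfl fun j _ => by ring

lemma sum_sq_sub_diagonal_apply [Fintype ι] [DecidableEq ι] (X : Matrix ι ι ℝ) (d : ι → ℝ) :
    ∑ i, ∑ j, (X i j - diagonal d i j) ^ 2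
      = ∑ i, ∑ j, X i j ^ 2 - 2 * ∑ i, d i * X i i + ∑ i, d i ^ 2 := by
  have h : ∀ i, ∑ j, (X i j - diagonal d i j) ^ 2
      = ∑ j, X i j ^ 2 - 2 * (d i * X i i) + d i ^ 2 := by
    intro i
    have hoff : ∀ j ∈ univ.erase i, (X i j - diagonal d i j) ^ 2 = X i j ^ 2 := fun j hj => by
      rw [diagonal_apply_ne _ (Finset.ne_of_mem_erase hj).symm, sub_zero]
    rw [← Finset.add_sum_erase _ _ (mem_univ i), ← Finset.add_sum_erase _ _ (mem_univ i),
      Finset.sum_congr rfl hoff, diagonal_apply_eq]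
    ring
  simp only [h, Finset.sum_add_distrib, Finset.sum_sub_distrib, Finset.mul_sum]

lemma sum_sq_diagonal_apply [Fintype ι] [DecidableEq ι] (d : ι → ℝ) :
    ∑ i, ∑ j, diagonal d i j ^ 2 = ∑ i, d i ^ 2 := by
  refine Finset.sum_congr rfl fun i _ => ?_
  rw [Finset.sum_eq_single i (fun j _ hji => by simp [diagonal_apply_ne _ hji.symm]) (by simp),
    diagonal_apply_eq]

lemma PosSemidef.exists_eq_mul_diagonal_mul_transpose [Fintype ι] [DecidableEq ι]
    {B : Matrix ι ι ℝ} (hB : B.PosSemidef) :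
    ∃ (V : Matrix ι ι ℝ) (d : ι → ℝ), Vᵀ * V = 1 ∧ V * Vᵀ = 1 ∧ 0 ≤ d ∧
      Fintype.card {i // d i ≠ 0} = B.rank ∧ B = V * diagonal d * Vᵀ := by
  have hV := Unitary.mem_iff.mp hB.1.eigenvectorUnitary.2
  simp only [star_eq_conjTranspose, conjTranspose_eq_transpose_of_trivial] at hV
  refine ⟨_, _, hV.1, hV.2, hB.eigenvalues_nonneg, (hB.1.rank_eq_card_non_zero_eigs).symm, ?_⟩
  simpa [Unitary.conjStarAlgAut_apply, star_eq_conjTranspose] using hB.1.spectral_theorem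

end Matrix

def truncPosPart {n : ℕ} (r : ℕ) (μ : Fin n → ℝ) (i : Fin n) : ℝ :=
  if (i : ℕ) < r then max (μ i) 0 else 0

section truncPosPart

variable {n r : ℕ} (μ : Fin n → ℝ)

lemma truncPosPart_nonneg : 0 ≤ truncPosPart r μ := fun i => by
  unfold truncPosPart; split_ifs <;> simp

lemma card_truncPosPart_ne_zero_le : Fintype.card {i // truncPosPart r μ i ≠ 0} ≤ r := by
  rw [Fintype.card_subtype]
  calc #{i | truncPosPart r μ i ≠ 0} ≤ #{i : Fin n | (i : ℕ) < r} :=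
        card_le_card fun i => by unfold truncPosPart; aesop
    _ ≤ r := by rw [Fin.card_filter_val_lt]; exact min_le_right n r

lemma sq_truncPosPart_sub (i : Fin n) :
    (truncPosPart r μ i - μ i) ^ 2 = if μ i < 0 ∨ r < (i : ℕ) + 1 then μ i ^ 2 else 0 := by
  unfold truncPosPart
  by_cases hi : (i : ℕ) < r
  · by_cases hμ : μ i < 0
    · rw [if_pos hi, max_eq_right hμ.le, if_pos (Or.inl hμ)]
      ring
    · rw [if_pos hi, max_eq_left (not_lt.mp hμ), if_neg (not_or.mpr ⟨hμ, by omega⟩)]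
      ring
  · rw [if_neg hi, if_pos (Or.inr (by omega))]
    ring

lemma sq_truncPosPart_sub_eq_sq_sub_sq (i : Fin n) :
    (truncPosPart r μ i - μ i) ^ 2 = μ i ^ 2 - truncPosPart r μ i ^ 2 := by
  unfold truncPosPart
  split_ifs
  · rcases le_total (μ i) 0 with hμ | hμ
    · rw [max_eq_right hμ]; ring
    · rw [max_eq_left hμ]; ring
  · ring

end truncPosPart

lemma Fin.sum_mul_le_sum_lt_of_antitone {n r : ℕ} {f w : Fin n → ℝ} (hf : Antitone f)
    (hf0 : 0 ≤ f) (hw0 : 0 ≤ w) (hw1 : w ≤ 1) (hw : ∑ i, w i ≤ r) :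
    ∑ i, f i * w i ≤ ∑ i : Fin n, if (i : ℕ) < r then f i else 0 := by
  rcases lt_or_ge r n with hrn | hnr
  · set c := f ⟨r, hrn⟩
    -- compare termwise with the extremal weights `[i < r]`, pricing moved weight at `c`
    have hterm : ∀ i : Fin n, f i * w i ≤ (if (i : ℕ) < r then f i else 0)
        + c * (w i - if (i : ℕ) < r then 1 else 0) := by
      intro i
      split_ifs with hi
      · have : c ≤ f i := hf (Fin.mk_le_mk.mpr hi.le)
        have hwi : w i ≤ 1 := hw1 i
        nlinarith [mul_nonneg (sub_nonneg.2 this) (sub_nonneg.2 hwi)]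
      · have : f i ≤ c := hf (Fin.mk_le_mk.mpr (not_lt.mp hi))
        nlinarith [mul_nonneg (sub_nonneg.2 this) (hw0 i)]
    have hcard : ∑ i : Fin n, (if (i : ℕ) < r then (1 : ℝ) else 0) = r := by
      rw [sum_boole, Fin.card_filter_val_lt, min_eq_right hrn.le]
    calc ∑ i, f i * w i
        ≤ ∑ i : Fin n, ((if (i : ℕ) < r then f i else 0)
            + c * (w i - if (i : ℕ) < r then 1 else 0)) := sum_le_sum fun i _ => hterm i
      _ = ∑ i : Fin n, (if (i : ℕ) < r then f i else 0) + c * (∑ i, w i - r) := by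
          rw [sum_add_distrib, ← mul_sum, sum_sub_distrib, hcard]
      _ ≤ ∑ i : Fin n, (if (i : ℕ) < r then f i else 0) := by
          nlinarith [mul_nonneg (hf0 ⟨r, hrn⟩) (sub_nonneg.2 hw)]
  · refine sum_le_sum fun i _ => ?_
    rw [if_pos (i.isLt.trans_le hnr)]
    have hwi : w i ≤ 1 := hw1 i
    nlinarith [mul_nonneg (hf0 i) (sub_nonneg.2 hwi)]

lemma two_mul_sum_mul_diag_sub_sum_sq_le {ι : Type*} [Fintype ι] [DecidableEq ι] {n r : ℕ}
    {a : Fin n → ℝ} (ha : Antitone a) (ha0 : 0 ≤ a) {W : Matrix (Fin n) ι ℝ}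
    (hW : Wᵀ * W = 1) (hW' : W * Wᵀ = 1) {d : ι → ℝ} (hd : Fintype.card {j // d j ≠ 0} ≤ r) :
    2 * ∑ i, a i * (W * diagonal d * Wᵀ) i i - ∑ j, d j ^ 2
      ≤ ∑ i : Fin n, if (i : ℕ) < r then a i ^ 2 else 0 := by
  set S : Finset ι := {j | d j ≠ 0}
  set b : ι → ℝ := fun j => ∑ i, a i * W i j ^ 2
  set w : Fin n → ℝ := fun i => ∑ j ∈ S, W i j ^ 2
  have hdiag : ∑ i, a i * (W * diagonal d * Wᵀ) i i = ∑ j, d j * b j := by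
    simp only [mul_diagonal_mul_transpose_apply_self, mul_sum, b]
    rw [sum_comm]
    exact sum_congr rfl fun j _ => sum_congr rfl fun i _ => by ring
  have hquad : ∀ j, 2 * (d j * b j) - d j ^ 2 ≤ if d j ≠ 0 then b j ^ 2 else 0 := by
    intro j
    split_ifs with h
    · nlinarith [sq_nonneg (d j - b j)]
    · simp [not_not.mp h]
  -- Cauchy–Schwarz against the unit column `W · j`
  have hcs : ∀ j, b j ^ 2 ≤ ∑ i, a i ^ 2 * W i j ^ 2 := by
    intro j
    have h := sum_mul_sq_le_sq_mul_sq univ (fun i => W i j) (fun i => a i * W i j)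
    rw [sum_sq_apply_of_transpose_mul_self hW j, one_mul] at h
    calc b j ^ 2 = (∑ i, W i j * (a i * W i j)) ^ 2 := by
          simp only [b]
          congr 1
          exact sum_congr rfl fun i _ => by ring
      _ ≤ ∑ i, (a i * W i j) ^ 2 := h
      _ = ∑ i, a i ^ 2 * W i j ^ 2 := sum_congr rfl fun i _ => by ring
  have hw0 : 0 ≤ w := fun i => sum_nonneg fun j _ => sq_nonneg _
  have hw1 : w ≤ 1 := fun i =>
    calc w i ≤ ∑ j, W i j ^ 2 :=
          sum_le_sum_of_subset_of_nonneg (subset_univ S) fun j _ _ => sq_nonneg _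
      _ = 1 := by
          simpa using sum_sq_apply_of_transpose_mul_self (W := Wᵀ) (by simpa using hW') i
  have hw : ∑ i, w i ≤ r := by
    rw [sum_comm, sum_congr rfl fun j _ => sum_sq_apply_of_transpose_mul_self hW j, sum_const,
      nsmul_one, ← Fintype.card_subtype]
    exact_mod_cast hd
  calc 2 * ∑ i, a i * (W * diagonal d * Wᵀ) i i - ∑ j, d j ^ 2
      = ∑ j, (2 * (d j * b j) - d j ^ 2) := by rw [hdiag, mul_sum, sum_sub_distrib]
    _ ≤ ∑ j ∈ S, b j ^ 2 := by rw [sum_filter]; exact sum_le_sum fun j _ => hquad j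
    _ ≤ ∑ j ∈ S, ∑ i, a i ^ 2 * W i j ^ 2 := sum_le_sum fun j _ => hcs j
    _ = ∑ i, a i ^ 2 * w i := by rw [sum_comm]; simp only [w, mul_sum]
    _ ≤ _ := Fin.sum_mul_le_sum_lt_of_antitone (fun i j h => pow_le_pow_left₀ (ha0 j) (ha h) 2)
          (fun i => sq_nonneg _) hw0 hw1 hw

lemma sum_sq_truncPosPart_sub_le {ι : Type*} [Fintype ι] [DecidableEq ι] {n r : ℕ}
    {μ : Fin n → ℝ} (hμ : Antitone μ) {W : Matrix (Fin n) ι ℝ} (hW : Wᵀ * W = 1)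
    (hW' : W * Wᵀ = 1) {d : ι → ℝ} (hd0 : 0 ≤ d) (hd : Fintype.card {j // d j ≠ 0} ≤ r) :
    ∑ i, (truncPosPart r μ i - μ i) ^ 2
      ≤ ∑ i, ∑ j, ((W * diagonal d * Wᵀ) i j - diagonal μ i j) ^ 2 := by
  set a : Fin n → ℝ := fun i => max (μ i) 0
  have hX : ∀ i, 0 ≤ (W * diagonal d * Wᵀ) i i := fun i => by
    rw [mul_diagonal_mul_transpose_apply_self]
    exact sum_nonneg fun j _ => mul_nonneg (hd0 j) (sq_nonneg _)
  have hμa : ∑ i, μ i * (W * diagonal d * Wᵀ) i i ≤ ∑ i, a i * (W * diagonal d * Wᵀ) i i :=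
    sum_le_sum fun i _ => mul_le_mul_of_nonneg_right (le_max_left _ _) (hX i)
  have hkey := two_mul_sum_mul_diag_sub_sum_sq_le (a := a) (fun i j h => max_le_max (hμ h) le_rfl)
    (fun i => le_max_right _ _) hW hW' hd
  have hν : ∑ i, truncPosPart r μ i ^ 2 = ∑ i : Fin n, if (i : ℕ) < r then a i ^ 2 else 0 :=
    sum_congr rfl fun i _ => by simp [truncPosPart, ite_pow, a]
  rw [sum_sq_sub_diagonal_apply, sum_sq_mul_mul_transpose_apply hW, sum_sq_diagonal_apply]
  simp only [sq_truncPosPart_sub_eq_sq_sub_sq, sum_sub_distrib]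
  linarith

theorem psd_low_rank_approx_general (n r : ℕ) (M : Matrix (Fin n) (Fin n) ℝ)
    (μ : Fin n → ℝ) (hmono : ∀ i j : Fin n, i ≤ j → μ j ≤ μ i)
    (U : Matrix (Fin n) (Fin n) ℝ) (hU : Uᵀ * U = 1)
    (hdecomp : M = U * Matrix.diagonal μ * Uᵀ) :
    IsLeast
      { x : ℝ | ∃ B : Matrix (Fin n) (Fin n) ℝ,
          B.PosSemidef ∧ B.rank ≤ r ∧ x = ∑ i, ∑ j, (B i j - M i j) ^ 2 }
      (∑ i : Fin n, if μ i < 0 ∨ r < (i : ℕ) + 1 then (μ i) ^ 2 else 0) := by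
  have hUU : U * Uᵀ = 1 := mul_eq_one_comm.mp hU
  have hdist : ∀ X : Matrix (Fin n) (Fin n) ℝ, ∑ i, ∑ j, ((U * X * Uᵀ) i j - M i j) ^ 2
      = ∑ i, ∑ j, (X i j - diagonal μ i j) ^ 2 := fun X => by
    rw [hdecomp]
    exact sum_sq_sub_mul_mul_transpose_apply hU X _
  simp only [← sq_truncPosPart_sub]
  refine ⟨⟨U * diagonal (truncPosPart r μ) * Uᵀ, ?_, ?_, ?_⟩, ?_⟩
  · simpa using (posSemidef_diagonal_iff.mpr (truncPosPart_nonneg μ)).mul_mul_conjTranspose_same U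
  · calc (U * diagonal (truncPosPart r μ) * Uᵀ).rank ≤ (diagonal (truncPosPart r μ)).rank :=
          (rank_mul_le_left _ _).trans (rank_mul_le_right _ _)
      _ ≤ r := by rw [rank_diagonal]; exact card_truncPosPart_ne_zero_le μ
  · rw [hdist]
    simp only [← Matrix.sub_apply, diagonal_sub, sum_sq_diagonal_apply]
  · rintro _ ⟨B, hB, hrank, rfl⟩
    obtain ⟨V, d, hV, hV', hd0, hd, rfl⟩ := hB.exists_eq_mul_diagonal_mul_transpose
    have hW : (Uᵀ * V)ᵀ * (Uᵀ * V) = 1 := by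
      simp [Matrix.mul_assoc, ← Matrix.mul_assoc U, hUU, hV]
    have hW' : (Uᵀ * V) * (Uᵀ * V)ᵀ = 1 := by
      simp [Matrix.mul_assoc, ← Matrix.mul_assoc V, hV', hU]
    have hB : U * (Uᵀ * V * diagonal d * (Uᵀ * V)ᵀ) * Uᵀ = V * diagonal d * Vᵀ := by
      simp [Matrix.mul_assoc, ← Matrix.mul_assoc U, hUU]
    rw [← hB, hdist]
    exact sum_sq_truncPosPart_sub_le hmono hW hW' hd0 (hd ▸ hrank)

theorem psd_low_rank_approx (n r : ℕ) (M : Matrix (Fin n) (Fin n) ℝ) (hM : M.IsSymm)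
    (μ : Fin n → ℝ) (hmono : ∀ i j : Fin n, i ≤ j → μ j ≤ μ i)
    (U : Matrix (Fin n) (Fin n) ℝ) (hU : Uᵀ * U = 1)
    (hdecomp : M = U * Matrix.diagonal μ * Uᵀ) :
    IsLeast
      { x : ℝ | ∃ B : Matrix (Fin n) (Fin n) ℝ,
          B.PosSemidef ∧ B.rank ≤ r ∧ x = ∑ i, ∑ j, (B i j - M i j) ^ 2 }
      (∑ i : Fin n, if μ i < 0 ∨ r < (i : ℕ) + 1 then (μ i) ^ 2 else 0) :=
  psd_low_rank_approx_general n r M μ hmono U hU hdecomp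
end

section
/- Conversely, if D is an n×n symmetric matrix with zero diagonal such that -(1/2) V D V is positive semi-definite (V = I - (1/n)J the centering matrix), then D is a Euclidean distance matrix: there exist points x_1,...,x_n ∈ R^n with D_{ij} = ||x_i - x_j||^2. -/
/-!
Positive semidefiniteness makes `B = -(1/2) V D V` the Gram matrix of points `x i`, so
`‖x i - x j‖² = B i i + B j j - B i j - B j i`. The combination `A i i + A j j - A i j - A j i`
is the quadratic form of `A` at `e i - e j`, a vector fixed by the centering matrix `V`; hence it
takes the same value on `V D V` as on `D`, where hollowness and symmetry make it `-2 D i j`.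
-/

open Matrix

namespace Matrix

variable {ι : Type*}

theorem norm_sub_sq_eq_gram {E : Type*} [NormedAddCommGroup E] [InnerProductSpace ℝ E]
    (x : ι → E) (i j : ι) :
    ‖x i - x j‖ ^ 2 = gram ℝ x i i + gram ℝ x j j - gram ℝ x i j - gram ℝ x j i := by
  simp only [gram_apply, real_inner_self_eq_norm_sq, real_inner_comm (x i), norm_sub_sq_real]
  ring

variable [Fintype ι]

open scoped ComplexOrder in
theorem PosSemidef.exists_gram_eq {𝕜 : Type*} [RCLike 𝕜] {B : Matrix ι ι 𝕜}
    (hB : B.PosSemidef) : ∃ x : ι → EuclideanSpace 𝕜 ι, gram 𝕜 x = B := by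
  classical
  open scoped MatrixOrder in
  obtain ⟨C, rfl⟩ := CStarAlgebra.nonneg_iff_eq_star_mul_self.mp hB.nonneg
  refine ⟨fun j ↦ WithLp.toLp 2 (fun k ↦ C k j), ?_⟩
  rw [gram_eq_conjTranspose_mul (EuclideanSpace.basisFun ι 𝕜)]
  rfl

variable {R : Type*} [CommRing R] [DecidableEq ι]

theorem centering_mul_mul_centering_apply (c : R) (D : Matrix ι ι R) (i j : ι) :
    ((1 - c • of fun _ _ ↦ 1) * D * (1 - c • of fun _ _ ↦ 1) : Matrix ι ι R) i j =
      D i j - c * ∑ k, D i k - c * ∑ k, D k j + c ^ 2 * ∑ k, ∑ l, D k l := by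
  rw [sub_mul, one_mul, mul_sub, mul_one]
  simp only [sub_mul, sub_apply, smul_mul, smul_apply, mul_apply, of_apply, one_mul, mul_one,
    smul_eq_mul, ← Finset.sum_mul]
  rw [Finset.sum_comm]
  ring

theorem centering_mul_mul_centering_apply_diag_sub_offDiag (c : R) (D : Matrix ι ι R) (i j : ι) :
    letI A : Matrix ι ι R := (1 - c • of fun _ _ ↦ 1) * D * (1 - c • of fun _ _ ↦ 1)
    A i i + A j j - A i j - A j i = D i i + D j j - D i j - D j i := by
  simp only [centering_mul_mul_centering_apply]
  ring

end Matrix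

theorem psd_center_implies_edm (n : ℕ) (D : Matrix (Fin n) (Fin n) ℝ)
    (hsymm : D.IsSymm) (hhollow : ∀ i, D i i = 0)
    (hpsd :
      let J : Matrix (Fin n) (Fin n) ℝ := Matrix.of fun _ _ => (1 : ℝ)
      let V : Matrix (Fin n) (Fin n) ℝ := 1 - (n : ℝ)⁻¹ • J
      ((-(1/2 : ℝ)) • (V * D * V)).PosSemidef) :
    ∃ x : Fin n → EuclideanSpace ℝ (Fin n), ∀ i j, D i j = ‖x i - x j‖ ^ 2 := by
  obtain ⟨x, hx⟩ := hpsd.exists_gram_eq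
  refine ⟨x, fun i j ↦ ?_⟩
  have hcentered := centering_mul_mul_centering_apply_diag_sub_offDiag (n : ℝ)⁻¹ D i j
  rw [norm_sub_sq_eq_gram, hx]
  simp only [Matrix.smul_apply, smul_eq_mul, hhollow, hsymm.apply i j] at hcentered ⊢
  linear_combination hcentered / 2
end

section
/- Let D be a symmetric hollow n×n matrix and let D_cmds = EDM(X^T X) where X solves the classical MDS problem in dimension r (keeping the r largest positive eigenvalues of -(1/2)VDV). With λ̄ defined by zeroing the eigenvalues of D̂ kept by cMDS, C_1 = Σλ̄_i^2, C_2 = -Σλ̄_i, and S the orthogonal matrix Q·blockdiag(U,1) where U diagonalizes D̂, one has ||D - D_cmds||_F^2 = C_1 + C_2^2 + (n||(S∘S)λ̄||^2 - C_2^2)/2. -/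
/-!
`Q` maps the last basis vector to a multiple of `1`, so `QPQ = V` for the projection `P` killing
the last coordinate. As `D̂` is the leading block of `QDQ`, this gives
`S diag(-λ/2, 0) Sᵀ = -½ VDV`, the classical MDS Gram matrix, and for symmetric hollow `D` the
EDM map `G ↦ diag G 1ᵀ + 1 (diag G)ᵀ - 2G` sends `-½ VDV` back to `D`. The map is linear, so
`D - D_cmds` is the EDM of `Z = -½ S diag(λ̄) Sᵀ`. This `Z` is centred (`λ̄` vanishes on the last
coordinate, the only one where `Sᵀ1` does not), which kills the cross terms of `‖EDM(Z)‖²` and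
leaves `2(n+1) Σ Zᵢᵢ² + 4 ‖Z‖² + 2 (tr Z)²`; orthogonality of `S` turns these into `(S ∘ S) λ̄`,
`Σ λ̄ᵢ²` and `Σ λ̄ᵢ`.
-/

open Matrix

namespace Matrix

section EDM

variable {ι R : Type*} [CommRing R]

/-- For a Gram matrix `G = XᵀX`, the entry `(i, j)` is `‖xᵢ - xⱼ‖²`. -/
def edmOfGram : Matrix ι ι R →ₗ[R] Matrix ι ι R where
  toFun G := of fun i j => G i i + G j j - 2 * G i j
  map_add' G H := by ext i j; simp only [add_apply, of_apply]; ring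
  map_smul' c G := by ext i j; simp only [smul_apply, of_apply, smul_eq_mul, RingHom.id_apply]; ring

@[simp]
theorem edmOfGram_apply (G : Matrix ι ι R) (i j : ι) :
    edmOfGram G i j = G i i + G j j - 2 * G i j :=
  rfl

theorem edmOfGram_of_diag_eq_zero {A : Matrix ι ι R} (hA : ∀ i, A i i = 0) :
    edmOfGram A = (-2 : R) • A := by
  ext i j
  simp [hA]

theorem edmOfGram_add_vecMulVec_one (A : Matrix ι ι R) (a : ι → R) (t : R) :
    edmOfGram (A + vecMulVec 1 a + vecMulVec a 1 + t • vecMulVec 1 1) = edmOfGram A := by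
  ext i j
  simp only [edmOfGram_apply, add_apply, smul_apply, vecMulVec_apply, Pi.one_apply, smul_eq_mul]
  ring

theorem sum_sum_edmOfGram_sq [Fintype ι] {Z : Matrix ι ι R} (hZ : Z.IsSymm) (h1 : Z *ᵥ 1 = 0) :
    ∑ i, ∑ j, edmOfGram Z i j ^ 2 =
      2 * Fintype.card ι * ∑ i, Z i i ^ 2 + 4 * ∑ i, ∑ j, Z i j ^ 2 + 2 * Z.trace ^ 2 := by
  have hrow (i : ι) : ∑ j, Z i j = 0 := by simpa [mulVec, dotProduct] using congrFun h1 i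
  have hcol (j : ι) : ∑ i, Z i j = 0 := by simpa only [hZ.apply] using hrow j
  have hexp (i j : ι) : edmOfGram Z i j ^ 2 =
      Z i i ^ 2 + Z j j ^ 2 + 4 * Z i j ^ 2 + 2 * (Z i i * Z j j)
        - 4 * (Z i i * Z i j) - 4 * (Z j j * Z i j) := by
    rw [edmOfGram_apply]; ring
  simp only [hexp, Finset.sum_add_distrib, Finset.sum_sub_distrib, Finset.sum_const,
    Finset.card_univ, nsmul_eq_mul, ← Finset.mul_sum, ← Finset.sum_mul, hrow, mul_zero]
  rw [Finset.sum_comm (f := fun i j => Z j j * Z i j)]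
  simp only [← Finset.mul_sum, hcol, mul_zero, Finset.sum_const_zero, trace, diag_apply]
  ring

end EDM

section Centering

variable {ι K : Type*} [Fintype ι] [DecidableEq ι] [Field K]

variable (ι K) in
def centeringMatrix : Matrix ι ι K := 1 - (Fintype.card ι : K)⁻¹ • vecMulVec 1 1

theorem edmOfGram_centeringMatrix_mul_mul {A : Matrix ι ι K} (hA : A.IsSymm) :
    edmOfGram (centeringMatrix ι K * A * centeringMatrix ι K) = edmOfGram A := by
  set c := (Fintype.card ι : K)⁻¹
  have hVAV : centeringMatrix ι K * A * centeringMatrix ι K =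
      A + vecMulVec 1 (-c • A *ᵥ 1) + vecMulVec (-c • A *ᵥ 1) 1
        + (c * c * (1 ⬝ᵥ A *ᵥ 1)) • vecMulVec 1 1 := by
    simp only [centeringMatrix, sub_mul, mul_sub, Matrix.one_mul, Matrix.mul_one, Matrix.smul_mul,
      Matrix.mul_smul, vecMulVec_mul, mul_vecMulVec, ← mulVec_transpose, hA.eq, smul_mulVec,
      vecMulVec_mulVec, op_smul_eq_smul, dotProduct_comm (A *ᵥ 1), vecMulVec_smul, smul_vecMulVec]
    module
  rw [hVAV, edmOfGram_add_vecMulVec_one]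

theorem edmOfGram_neg_half_smul_centeringMatrix_mul_mul [NeZero (2 : K)] {D : Matrix ι ι K}
    (hsymm : D.IsSymm) (hhollow : ∀ i, D i i = 0) :
    edmOfGram ((-(1 / 2) : K) • (centeringMatrix ι K * D * centeringMatrix ι K)) = D := by
  rw [map_smul, edmOfGram_centeringMatrix_mul_mul hsymm, edmOfGram_of_diag_eq_zero hhollow,
    smul_smul, show -(1 / 2 : K) * -2 = 1 by field_simp, one_smul]

theorem sub_edmOfGram_mul_diagonal_mul_transpose [NeZero (2 : K)] {D S : Matrix ι ι K}
    {ν : ι → K} (hsymm : D.IsSymm) (hhollow : ∀ i, D i i = 0)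
    (hgram : S * diagonal ν * Sᵀ =
      (-(1 / 2) : K) • (centeringMatrix ι K * D * centeringMatrix ι K)) (μ : ι → K) :
    D - edmOfGram (S * diagonal μ * Sᵀ) = edmOfGram (S * diagonal (ν - μ) * Sᵀ) := by
  rw [show diagonal (ν - μ) = diagonal ν - diagonal μ from (diagonal_sub ν μ).symm,
    Matrix.mul_sub, Matrix.sub_mul, map_sub, hgram,
    edmOfGram_neg_half_smul_centeringMatrix_mul_mul hsymm hhollow]

end Centering

section Householder

variable {ι K : Type*} [Fintype ι] [DecidableEq ι] [Field K]

theorem householder_sub_mulVec {x y : ι → K} (hxy : x ⬝ᵥ x = y ⬝ᵥ y)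
    (h : (x - y) ⬝ᵥ (x - y) ≠ 0) : householder (x - y) *ᵥ x = y := by
  have hv : (x - y) ⬝ᵥ (x - y) = 2 * ((x - y) ⬝ᵥ x) := by
    simp only [sub_dotProduct, dotProduct_sub, dotProduct_comm y x, hxy]; ring
  have hc : 2 / ((x - y) ⬝ᵥ (x - y)) * ((x - y) ⬝ᵥ x) = 1 := by
    rw [hv] at h ⊢; field_simp; exact div_self h
  rw [householder, sub_mulVec, one_mulVec, smul_mulVec, vecMulVec_mulVec, op_smul_eq_smul,
    smul_smul, hc, one_smul, sub_sub_cancel]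

end Householder

section AxisReflector

variable {ι : Type*} [Fintype ι] [DecidableEq ι] (i : ι)

noncomputable def axisReflector : Matrix ι ι ℝ :=
  householder (1 - Pi.single i (-√(Fintype.card ι)))

theorem axisReflector_transpose : (axisReflector i)ᵀ = axisReflector i :=
  householder_transpose _

theorem dotProduct_self_one_sub_single_ne_zero :
    (1 - Pi.single i (-√(Fintype.card ι)) : ι → ℝ) ⬝ᵥ (1 - Pi.single i (-√(Fintype.card ι)))
      ≠ 0 := by
  rw [Ne, dotProduct_self_eq_zero]
  intro h
  have hi := congrFun h i
  simp only [Pi.sub_apply, Pi.one_apply, Pi.single_eq_same, Pi.zero_apply, sub_neg_eq_add] at hi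
  linarith [Real.sqrt_nonneg (Fintype.card ι)]

theorem axisReflector_mul_self : axisReflector i * axisReflector i = 1 :=
  householder_mul_self (dotProduct_self_one_sub_single_ne_zero i)

theorem axisReflector_mulVec_one : axisReflector i *ᵥ 1 = Pi.single i (-√(Fintype.card ι)) := by
  refine householder_sub_mulVec ?_ (dotProduct_self_one_sub_single_ne_zero i)
  simp

theorem axisReflector_mulVec_single :
    axisReflector i *ᵥ Pi.single i 1 = (-√(Fintype.card ι))⁻¹ • 1 := by
  have : Nonempty ι := ⟨i⟩
  have hs : -√(Fintype.card ι) ≠ 0 := by simp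
  have h := congrArg (axisReflector i *ᵥ ·) (axisReflector_mulVec_one i)
  simp only [mulVec_mulVec, axisReflector_mul_self, one_mulVec] at h
  rw [show Pi.single i (-√(Fintype.card ι)) = -√(Fintype.card ι) • Pi.single i (1 : ℝ) by
    rw [← Pi.single_smul', smul_eq_mul, mul_one], mulVec_smul] at h
  rw [h, smul_smul, inv_mul_cancel₀ hs, one_smul]

theorem axisReflector_mul_diagonal_mul_axisReflector :
    axisReflector i * diagonal (1 - Pi.single i 1) * axisReflector i = centeringMatrix ι ℝ := by
  have hc : (-√(Fintype.card ι))⁻¹ * (-√(Fintype.card ι))⁻¹ = (Fintype.card ι : ℝ)⁻¹ := by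
    rw [inv_neg, neg_mul_neg, ← mul_inv, Real.mul_self_sqrt (Nat.cast_nonneg _)]
  have hP : diagonal (1 - Pi.single i 1 : ι → ℝ) =
      1 - vecMulVec (Pi.single i 1) (Pi.single i 1) := by
    rw [← single_eq_single_vecMulVec_single, ← diagonal_single, ← diagonal_one, diagonal_sub]
    rfl
  rw [hP, mul_sub, sub_mul, Matrix.mul_one, axisReflector_mul_self, mul_vecMulVec, vecMulVec_mul,
    ← mulVec_transpose, axisReflector_transpose, axisReflector_mulVec_single, vecMulVec_smul,
    smul_vecMulVec, smul_smul, hc, centeringMatrix]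

theorem axisReflector_last_eq (n : ℕ) :
    axisReflector (Fin.last n) =
      householder fun i => if i = Fin.last n then 1 + √(n + 1) else 1 := by
  have hv : (1 - Pi.single (Fin.last n) (-√(Fintype.card (Fin (n + 1)))) : Fin (n + 1) → ℝ) =
      fun i => if i = Fin.last n then 1 + √(n + 1) else 1 := by
    funext i
    by_cases hi : i = Fin.last n <;> simp [hi]
  rw [axisReflector, hv]

end AxisReflector

section OrthogonalConj

variable {ι R : Type*} [Fintype ι] [CommSemiring R]

theorem sum_sum_sq_eq_trace_mul_transpose (A : Matrix ι ι R) :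
    ∑ i, ∑ j, A i j ^ 2 = (A * Aᵀ).trace := by
  simp only [trace, diag_apply, mul_apply, transpose_apply, sq]

variable [DecidableEq ι] (S : Matrix ι ι R) (d : ι → R)

theorem isSymm_mul_diagonal_mul_transpose : (S * diagonal d * Sᵀ).IsSymm := by
  simp [IsSymm, transpose_mul, Matrix.mul_assoc]

theorem mul_diagonal_mul_transpose_apply (i j : ι) :
    (S * diagonal d * Sᵀ) i j = ∑ k, S i k * d k * S j k := by
  rw [mul_apply]
  simp only [mul_diagonal, transpose_apply]

theorem mul_diagonal_mul_transpose_apply_self_s15 (i : ι) :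
    (S * diagonal d * Sᵀ) i i = ((S ⊙ S) *ᵥ d) i := by
  simp only [mul_diagonal_mul_transpose_apply, mulVec, dotProduct, hadamard_apply]
  exact Finset.sum_congr rfl fun k _ => by ring

variable {S}

theorem trace_mul_diagonal_mul_transpose (hS : Sᵀ * S = 1) :
    (S * diagonal d * Sᵀ).trace = ∑ k, d k := by
  rw [trace_mul_comm, ← Matrix.mul_assoc, hS, Matrix.one_mul, trace_diagonal]

theorem sum_sum_mul_diagonal_mul_transpose_sq (hS : Sᵀ * S = 1) :
    ∑ i, ∑ j, (S * diagonal d * Sᵀ) i j ^ 2 = ∑ k, d k ^ 2 := by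
  have hsq : S * diagonal d * Sᵀ * (S * diagonal d * Sᵀ)ᵀ = S * diagonal (d * d) * Sᵀ := by
    rw [(isSymm_mul_diagonal_mul_transpose S d).eq]
    simp only [Matrix.mul_assoc]
    rw [← Matrix.mul_assoc Sᵀ, hS, Matrix.one_mul, ← Matrix.mul_assoc (diagonal d),
      diagonal_mul_diagonal]
    rfl
  rw [sum_sum_sq_eq_trace_mul_transpose, hsq, trace_mul_diagonal_mul_transpose _ hS]
  simp only [Pi.mul_apply, sq]

end OrthogonalConj

theorem sum_sum_edmOfGram_mul_diagonal_mul_transpose_sq {ι R : Type*} [Fintype ι]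
    [DecidableEq ι] [CommRing R] {S : Matrix ι ι R} (d : ι → R) (hS : Sᵀ * S = 1)
    (hd : diagonal d *ᵥ (Sᵀ *ᵥ 1) = 0) :
    ∑ i, ∑ j, edmOfGram (S * diagonal d * Sᵀ) i j ^ 2 =
      2 * Fintype.card ι * ∑ i, ((S ⊙ S) *ᵥ d) i ^ 2 + 4 * ∑ k, d k ^ 2
        + 2 * (∑ k, d k) ^ 2 := by
  have h1 : (S * diagonal d * Sᵀ) *ᵥ 1 = 0 := by
    rw [← mulVec_mulVec, ← mulVec_mulVec, hd, mulVec_zero]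
  rw [sum_sum_edmOfGram_sq (isSymm_mul_diagonal_mul_transpose S d) h1,
    sum_sum_mul_diagonal_mul_transpose_sq d hS, trace_mul_diagonal_mul_transpose d hS]
  simp only [mul_diagonal_mul_transpose_apply_self_s15]

section ExtendByOne

variable {n : ℕ} {R : Type*}

def extendByOne [Zero R] [One R] (U : Matrix (Fin n) (Fin n) R) :
    Matrix (Fin (n + 1)) (Fin (n + 1)) R :=
  of fun i j =>
    Fin.lastCases (Fin.lastCases (1 : R) (fun _ => 0) j)
      (fun i' => Fin.lastCases (0 : R) (fun j' => U i' j') j) i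

section Entries

variable [Zero R] [One R] (U : Matrix (Fin n) (Fin n) R)

@[simp] theorem extendByOne_last_last : extendByOne U (Fin.last n) (Fin.last n) = 1 := by
  simp [extendByOne]

@[simp] theorem extendByOne_last_castSucc (j : Fin n) :
    extendByOne U (Fin.last n) j.castSucc = 0 := by
  simp [extendByOne]

@[simp] theorem extendByOne_castSucc_last (i : Fin n) :
    extendByOne U i.castSucc (Fin.last n) = 0 := by
  simp [extendByOne]

@[simp] theorem extendByOne_castSucc_castSucc (i j : Fin n) :
    extendByOne U i.castSucc j.castSucc = U i j := by
  simp [extendByOne]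

end Entries

variable [CommRing R] {U : Matrix (Fin n) (Fin n) R}

theorem extendByOne_transpose_mul_self (hU : Uᵀ * U = 1) :
    (extendByOne U)ᵀ * extendByOne U = 1 := by
  ext i j
  induction i using Fin.lastCases with
  | last =>
    induction j using Fin.lastCases <;>
      simp [mul_apply, Fin.sum_univ_castSucc, (Fin.castSucc_ne_last _).symm]
  | cast i =>
    induction j using Fin.lastCases with
    | last => simp [mul_apply, Fin.sum_univ_castSucc, Fin.castSucc_ne_last]
    | cast j => simpa [mul_apply, Fin.sum_univ_castSucc, one_apply] using congrFun₂ hU i j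

theorem extendByOne_transpose_mulVec_single_last (c : R) :
    (extendByOne U)ᵀ *ᵥ Pi.single (Fin.last n) c = Pi.single (Fin.last n) c := by
  ext i
  induction i using Fin.lastCases <;> simp

theorem extendByOne_mul_diagonal_mul_transpose {A : Matrix (Fin (n + 1)) (Fin (n + 1)) R}
    {d : Fin n → R} (hA : ∀ i j, A i.castSucc j.castSucc = (U * diagonal d * Uᵀ) i j) :
    extendByOne U * diagonal (Fin.lastCases 0 d) * (extendByOne U)ᵀ =
      diagonal (1 - Pi.single (Fin.last n) 1) * A * diagonal (1 - Pi.single (Fin.last n) 1) := by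
  ext i j
  simp only [mul_diagonal_mul_transpose_apply, mul_diagonal, diagonal_mul]
  induction i using Fin.lastCases <;> induction j using Fin.lastCases <;>
    simp [Fin.sum_univ_castSucc, hA, mul_diagonal_mul_transpose_apply]

end ExtendByOne

section CmdsFrame

variable {n : ℕ} {U : Matrix (Fin n) (Fin n) ℝ}

noncomputable def cmdsFrame (U : Matrix (Fin n) (Fin n) ℝ) :
    Matrix (Fin (n + 1)) (Fin (n + 1)) ℝ :=
  axisReflector (Fin.last n) * extendByOne U

theorem cmdsFrame_transpose_mul_self (hU : Uᵀ * U = 1) : (cmdsFrame U)ᵀ * cmdsFrame U = 1 := by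
  rw [cmdsFrame, transpose_mul, Matrix.mul_assoc, ← Matrix.mul_assoc (axisReflector _)ᵀ,
    axisReflector_transpose, axisReflector_mul_self, Matrix.one_mul,
    extendByOne_transpose_mul_self hU]

theorem cmdsFrame_transpose_mulVec_one :
    (cmdsFrame U)ᵀ *ᵥ 1 = Pi.single (Fin.last n) (-√(n + 1)) := by
  rw [cmdsFrame, transpose_mul, ← mulVec_mulVec, axisReflector_transpose,
    axisReflector_mulVec_one, extendByOne_transpose_mulVec_single_last]
  simp

theorem cmdsFrame_mul_diagonal_mul_transpose {D : Matrix (Fin (n + 1)) (Fin (n + 1)) ℝ}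
    {l : Fin n → ℝ} (hD : ∀ i j, (axisReflector (Fin.last n) * D * axisReflector (Fin.last n))
      i.castSucc j.castSucc = (U * diagonal l * Uᵀ) i j) :
    cmdsFrame U * diagonal (Fin.lastCases 0 ((-(1 / 2) : ℝ) • l)) * (cmdsFrame U)ᵀ =
      (-(1 / 2) : ℝ) • (centeringMatrix _ ℝ * D * centeringMatrix _ ℝ) := by
  rw [← axisReflector_mul_diagonal_mul_axisReflector (Fin.last n), cmdsFrame, transpose_mul,
    axisReflector_transpose]
  set Q := axisReflector (Fin.last n)
  set P := diagonal (1 - Pi.single (Fin.last n) 1 : Fin (n + 1) → ℝ)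
  have hblock : extendByOne U * diagonal (Fin.lastCases 0 ((-(1 / 2) : ℝ) • l))
      * (extendByOne U)ᵀ = P * ((-(1 / 2) : ℝ) • (Q * D * Q)) * P := by
    refine extendByOne_mul_diagonal_mul_transpose fun i j => ?_
    simp only [Matrix.smul_apply, hD, mul_diagonal_mul_transpose_apply, Pi.smul_apply,
      smul_eq_mul, Finset.mul_sum]
    exact Finset.sum_congr rfl fun k _ => by ring
  calc _ = Q * (extendByOne U * diagonal (Fin.lastCases 0 ((-(1 / 2) : ℝ) • l))
          * (extendByOne U)ᵀ) * Q := by simp only [Matrix.mul_assoc]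
    _ = _ := by simp only [hblock, Matrix.mul_smul, Matrix.smul_mul, Matrix.mul_assoc]

end CmdsFrame

end Matrix

theorem cmds_sstress_decomposition (n r : ℕ) (D : Matrix (Fin (n + 1)) (Fin (n + 1)) ℝ)
    (hsymm : D.IsSymm) (hhollow : ∀ i, D i i = 0) :
    let v : Fin (n + 1) → ℝ := fun i => if i = Fin.last n then 1 + Real.sqrt (n + 1) else 1
    let Q : Matrix (Fin (n + 1)) (Fin (n + 1)) ℝ := 1 - (2 / (v ⬝ᵥ v)) • vecMulVec v v
    let Dhat : Matrix (Fin n) (Fin n) ℝ :=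
      Matrix.of fun i j => (Q * D * Q) i.castSucc j.castSucc
    ∀ (U : Matrix (Fin n) (Fin n) ℝ) (l : Fin n → ℝ),
      Uᵀ * U = 1 → (∀ i j : Fin n, i ≤ j → l i ≤ l j) →
      Dhat = U * Matrix.diagonal l * Uᵀ →
      let Ub : Matrix (Fin (n + 1)) (Fin (n + 1)) ℝ :=
        Matrix.of fun i j =>
          Fin.lastCases (Fin.lastCases (1 : ℝ) (fun _ => (0 : ℝ)) j)
            (fun i' => Fin.lastCases (0 : ℝ) (fun j' => U i' j') j) i
      let S : Matrix (Fin (n + 1)) (Fin (n + 1)) ℝ := Q * Ub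
      let lamBar : Fin (n + 1) → ℝ := fun i =>
        Fin.lastCases (0 : ℝ)
          (fun i' => if l i' > 0 ∨ r < (i' : ℕ) + 1 then l i' else 0) i
      let mu : Fin (n + 1) → ℝ := fun i =>
        Fin.lastCases (0 : ℝ)
          (fun i' => if l i' > 0 ∨ r < (i' : ℕ) + 1 then 0 else -(l i') / 2) i
      let Y : Matrix (Fin (n + 1)) (Fin (n + 1)) ℝ := S * Matrix.diagonal mu * Sᵀ
      let Dcmds : Matrix (Fin (n + 1)) (Fin (n + 1)) ℝ :=
        Matrix.of fun i j => Y i i + Y j j - 2 * Y i j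
      let C1 : ℝ := ∑ i, (lamBar i) ^ 2
      let C2 : ℝ := -∑ i, lamBar i
      ∑ i, ∑ j, (D i j - Dcmds i j) ^ 2 =
        C1 + C2 ^ 2 +
          (((n : ℝ) + 1) * (∑ i, ((S.hadamard S).mulVec lamBar i) ^ 2) - C2 ^ 2) / 2 := by
  intro v Q Dhat U l hU _ hDhat Ub S lamBar mu Y Dcmds C1 C2
  have hQ : Q = axisReflector (Fin.last n) := (axisReflector_last_eq n).symm
  have hS : S = cmdsFrame U := by rw [cmdsFrame, ← hQ]; rfl
  have hgram : S * diagonal (Fin.lastCases 0 ((-(1 / 2) : ℝ) • l)) * Sᵀ =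
      (-(1 / 2) : ℝ) • (centeringMatrix _ ℝ * D * centeringMatrix _ ℝ) :=
    hS ▸ cmdsFrame_mul_diagonal_mul_transpose fun i j => hQ ▸ congrFun₂ hDhat i j
  have hgap : Fin.lastCases 0 ((-(1 / 2) : ℝ) • l) - mu = (-(1 / 2) : ℝ) • lamBar := by
    funext k
    induction k using Fin.lastCases with
    | last => simp [mu, lamBar]
    | cast k =>
      simp only [mu, lamBar, Pi.sub_apply, Pi.smul_apply, Fin.lastCases_castSucc, smul_eq_mul]
      split_ifs <;> ring
  have hdiff : D - Dcmds = edmOfGram (S * diagonal ((-(1 / 2) : ℝ) • lamBar) * Sᵀ) := by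
    rw [← hgap, ← sub_edmOfGram_mul_diagonal_mul_transpose hsymm hhollow hgram mu]
    rfl
  have hcentred : diagonal ((-(1 / 2) : ℝ) • lamBar) *ᵥ (Sᵀ *ᵥ 1) = 0 := by
    rw [hS, cmdsFrame_transpose_mulVec_one, diagonal_mulVec_single]
    simp [lamBar]
  simp only [← Matrix.sub_apply, hdiff]
  rw [sum_sum_edmOfGram_mul_diagonal_mul_transpose_sq _ (hS ▸ cmdsFrame_transpose_mul_self hU)
    hcentred]
  simp only [mulVec_smul, Pi.smul_apply, smul_eq_mul, mul_pow, ← Finset.mul_sum,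
    Fintype.card_fin, C1, C2]
  push_cast
  ring
end
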